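/- Let σ ≥ 2L, x ∈ Q, z ∈ ℝⁿ, and let x⁺ ∈ Q satisfy ‖∇M_{x,σ}(x⁺) + ψ'(x⁺)‖ ≤ (σ/4)‖x⁺ − x‖² for some ψ'(x⁺) ∈ ∂ψ(x⁺). Suppose ‖g − ∇f(x)‖ ≤ δ_g and ‖B − ∇²f(z)‖ ≤ δ_B for some δ_g, δ_B ≥ 0. Then, with r := ‖x⁺ − x‖, one has σ·r³ ≥ (1/(4σ^{1/2}))·‖∇f(x⁺) + ψ'(x⁺)‖^{3/2} − (1/(4σ²))·(δ_B³ + L³‖x − z‖³) − δ_g^{3/2}/(2σ^{1/2}). -/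

import Mathlib

/-!
Compare `∇f(x⁺) + ψ'` with the model residual `∇M_{x,σ}(x⁺) + ψ'`: the difference consists of the
Taylor remainder of `∇f` (at most `(L/2) r²`, since `∇²f` is `L`-Lipschitz), the gradient error
`δ_g`, the Hessian errors `δ_B r` and `L ‖x - z‖ r`, and the cubic term of norm `(σ/2) r²`. With
`σ ≥ 2L` this gives `‖∇f(x⁺) + ψ'‖ ≤ σ r² + δ_g + (δ_B + L ‖x - z‖) r`. Raising to the power `3/2`
by convexity of `t ↦ t^{3/2}`, and splitting the mixed terms `(δ r)^{3/2}` with the AM-GM inequality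
against `σ^{3/2} r³`, yields the claim.
-/

open Set Real

section

variable {E F : Type*} [NormedAddCommGroup E] [NormedSpace ℝ E] [NormedAddCommGroup F]
  [NormedSpace ℝ F]

theorem norm_sub_sub_fderiv_le_of_lipschitz_fderiv {G : E → F} {L : ℝ} (hG : Differentiable ℝ G)
    (hLip : ∀ u v, ‖fderiv ℝ G v - fderiv ℝ G u‖ ≤ L * ‖v - u‖) (x y : E) :
    ‖G y - G x - fderiv ℝ G x (y - x)‖ ≤ L / 2 * ‖y - x‖ ^ 2 := by
  set v := y - x
  let φ : ℝ → F := fun t => G (x + t • v) - G x - t • fderiv ℝ G x v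
  have hφ : ∀ t, HasDerivAt φ ((fderiv ℝ G (x + t • v) - fderiv ℝ G x) v) t := by
    intro t
    have hline : HasDerivAt (fun t : ℝ => x + t • v) v t := by
      simpa using ((hasDerivAt_id t).smul_const v).const_add x
    rw [sub_apply]
    exact (((hG _).hasFDerivAt.comp_hasDerivAt t hline).sub_const (G x)).sub
      (by simpa using (hasDerivAt_id t).smul_const (fderiv ℝ G x v))
  have hbound : ∀ t ∈ Ico (0 : ℝ) 1,
      ‖(fderiv ℝ G (x + t • v) - fderiv ℝ G x) v‖ ≤ L * ‖v‖ ^ 2 * t := by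
    intro t ht
    calc ‖(fderiv ℝ G (x + t • v) - fderiv ℝ G x) v‖
        ≤ L * ‖x + t • v - x‖ * ‖v‖ := (ContinuousLinearMap.le_opNorm _ _).trans
          (mul_le_mul_of_nonneg_right (hLip _ _) (norm_nonneg v))
      _ = L * ‖v‖ ^ 2 * t := by
          rw [add_sub_cancel_left, norm_smul, Real.norm_of_nonneg ht.1]; ring
  have hB : ∀ t, HasDerivAt (fun t : ℝ => L / 2 * ‖v‖ ^ 2 * t ^ 2) (L * ‖v‖ ^ 2 * t) t := fun t =>
    ((hasDerivAt_pow 2 t).const_mul _).congr_deriv (by push_cast; ring)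
  have := image_norm_le_of_norm_deriv_right_le_deriv_boundary (f := φ)
    (fun t _ => (hφ t).continuousAt.continuousWithinAt) (fun t _ => (hφ t).hasDerivWithinAt)
    (by simp [φ]) hB hbound (right_mem_Icc.2 zero_le_one)
  simpa [φ, v] using this

theorem norm_add_le_of_approx_cubic_step {G : E → E} {L σ δg δB : ℝ} (hG : Differentiable ℝ G)
    (hLip : ∀ u v, ‖fderiv ℝ G v - fderiv ℝ G u‖ ≤ L * ‖v - u‖) (hσ : 2 * L ≤ σ) (hσ0 : 0 ≤ σ)
    {x z xp g ψp : E} {B : E →L[ℝ] E}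
    (hmodel : ‖g + B (xp - x) + (σ / 2 * ‖xp - x‖) • (xp - x) + ψp‖ ≤ σ / 4 * ‖xp - x‖ ^ 2)
    (hg : ‖g - G x‖ ≤ δg) (hB : ‖B - fderiv ℝ G z‖ ≤ δB) :
    ‖G xp + ψp‖ ≤ σ * ‖xp - x‖ ^ 2 + δg + (δB + L * ‖x - z‖) * ‖xp - x‖ := by
  set d := xp - x
  set H := fderiv ℝ G
  have htaylor : ‖G xp - G x - H x d‖ ≤ L / 2 * ‖d‖ ^ 2 :=
    norm_sub_sub_fderiv_le_of_lipschitz_fderiv hG hLip x xp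
  have hHx : ‖(H x - H z) d‖ ≤ L * ‖x - z‖ * ‖d‖ :=
    (ContinuousLinearMap.le_opNorm _ _).trans (by gcongr; exact hLip z x)
  have hHz : ‖(H z - B) d‖ ≤ δB * ‖d‖ :=
    (ContinuousLinearMap.le_opNorm _ _).trans (by gcongr; rwa [norm_sub_rev])
  have hcubic : ‖(σ / 2 * ‖d‖) • d‖ = σ / 2 * ‖d‖ ^ 2 := by
    rw [norm_smul, Real.norm_of_nonneg (by positivity)]; ring
  have hL : L / 2 * ‖d‖ ^ 2 ≤ σ / 4 * ‖d‖ ^ 2 :=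
    mul_le_mul_of_nonneg_right (by linarith) (sq_nonneg _)
  calc ‖G xp + ψp‖
      = ‖(g + B d + (σ / 2 * ‖d‖) • d + ψp) + (G xp - G x - H x d) + (G x - g) + (H x - H z) d
          + (H z - B) d - (σ / 2 * ‖d‖) • d‖ := by
        congr 1; simp only [sub_apply]; abel
    _ ≤ ‖g + B d + (σ / 2 * ‖d‖) • d + ψp‖ + ‖G xp - G x - H x d‖ + ‖G x - g‖
          + ‖(H x - H z) d‖ + ‖(H z - B) d‖ + ‖(σ / 2 * ‖d‖) • d‖ :=
        (norm_sub_le _ _).trans (add_le_add ((norm_add_le _ _).trans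
          (add_le_add ((norm_add_le _ _).trans (add_le_add norm_add₃_le le_rfl)) le_rfl)) le_rfl)
    _ ≤ σ * ‖d‖ ^ 2 + δg + (δB + L * ‖x - z‖) * ‖d‖ := by
        rw [norm_sub_rev] at hg
        linarith

end

theorem ContDiff.differentiable_gradient {E : Type*} [NormedAddCommGroup E]
    [InnerProductSpace ℝ E] [CompleteSpace E] {f : E → ℝ} {n : WithTop ℕ∞} (hf : ContDiff ℝ n f)
    (hn : 2 ≤ n) : Differentiable ℝ (gradient f) :=
  ((InnerProductSpace.toDual ℝ E).symm.contDiff.comp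
    (hf.fderiv_right (m := 1) (by simpa [one_add_one_eq_two] using hn))).differentiable one_ne_zero

theorem rpow_three_halves_sum_four_le {w x y z : ℝ} (hw : 0 ≤ w) (hx : 0 ≤ x) (hy : 0 ≤ y)
    (hz : 0 ≤ z) :
    (w + x + y + z) ^ (3 / 2 : ℝ) ≤
      2 * (w ^ (3 / 2 : ℝ) + x ^ (3 / 2 : ℝ) + y ^ (3 / 2 : ℝ) + z ^ (3 / 2 : ℝ)) := by
  have h := rpow_sum_le_const_mul_sum_rpow_of_nonneg (s := Finset.univ) (f := ![w, x, y, z])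
    (p := 3 / 2) (by norm_num) (by simp [Fin.forall_fin_succ, hw, hx, hy, hz])
  have h4 : (4 : ℝ) ^ (3 / 2 - 1 : ℝ) = 2 := by
    rw [show (4 : ℝ) = 2 ^ (2 : ℝ) by norm_num, ← rpow_mul (by norm_num)]
    norm_num
  simpa [Fin.sum_univ_four, h4, add_assoc] using h

theorem pow_two_rpow_three_halves {y : ℝ} (hy : 0 ≤ y) : (y ^ 2) ^ (3 / 2 : ℝ) = y ^ 3 := by
  rw [← rpow_natCast, ← rpow_mul hy]
  norm_num

theorem rpow_three_halves_sq {y : ℝ} (hy : 0 ≤ y) : (y ^ (3 / 2 : ℝ)) ^ 2 = y ^ 3 := by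
  rw [← rpow_natCast, ← rpow_mul hy]
  norm_num

theorem two_mul_rpow_three_halves_mul_le {a r c : ℝ} (ha : 0 ≤ a) (hr : 0 ≤ r) (hc : 0 < c) :
    2 * (a * r) ^ (3 / 2 : ℝ) ≤ a ^ 3 / c + c * r ^ 3 := by
  rw [mul_rpow ha hr, ← rpow_three_halves_sq ha, ← rpow_three_halves_sq hr,
    div_add' _ _ _ hc.ne', le_div_iff₀ hc]
  nlinarith [sq_nonneg (a ^ (3 / 2 : ℝ) - c * r ^ (3 / 2 : ℝ))]

theorem mul_pow_three_ge_of_le_quadratic {σ u p r a b : ℝ} (hσ : 0 < σ) (hu : 0 ≤ u)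
    (hp : 0 ≤ p) (hr : 0 ≤ r) (ha : 0 ≤ a) (hb : 0 ≤ b) (h : u ≤ σ * r ^ 2 + p + (a + b) * r) :
    σ * r ^ 3 ≥ 1 / (4 * √σ) * u ^ (3 / 2 : ℝ) - 1 / (4 * σ ^ 2) * (a ^ 3 + b ^ 3)
      - p ^ (3 / 2 : ℝ) / (2 * √σ) := by
  obtain ⟨s, hs, rfl⟩ : ∃ s, 0 < s ∧ σ = s ^ 2 := ⟨√σ, sqrt_pos.2 hσ, (sq_sqrt hσ.le).symm⟩
  rw [sqrt_sq hs.le]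
  have key : u ^ (3 / 2 : ℝ) ≤ 4 * s ^ 3 * r ^ 3 + 2 * p ^ (3 / 2 : ℝ) + (a ^ 3 + b ^ 3) / s ^ 3 :=
    calc u ^ (3 / 2 : ℝ) ≤ ((s * r) ^ 2 + p + a * r + b * r) ^ (3 / 2 : ℝ) := by
          gcongr; linarith
      _ ≤ 2 * (((s * r) ^ 2) ^ (3 / 2 : ℝ) + p ^ (3 / 2 : ℝ) + (a * r) ^ (3 / 2 : ℝ)
            + (b * r) ^ (3 / 2 : ℝ)) :=
          rpow_three_halves_sum_four_le (by positivity) hp (by positivity) (by positivity)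
      _ ≤ 2 * (s * r) ^ 3 + 2 * p ^ (3 / 2 : ℝ) + (a ^ 3 / s ^ 3 + s ^ 3 * r ^ 3)
            + (b ^ 3 / s ^ 3 + s ^ 3 * r ^ 3) := by
          rw [pow_two_rpow_three_halves (by positivity)]
          linarith [two_mul_rpow_three_halves_mul_le ha hr (pow_pos hs 3),
            two_mul_rpow_three_halves_mul_le hb hr (pow_pos hs 3)]
      _ = _ := by ring
  calc 1 / (4 * s) * u ^ (3 / 2 : ℝ) - 1 / (4 * (s ^ 2) ^ 2) * (a ^ 3 + b ^ 3)
        - p ^ (3 / 2 : ℝ) / (2 * s)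
      ≤ 1 / (4 * s) * (4 * s ^ 3 * r ^ 3 + 2 * p ^ (3 / 2 : ℝ) + (a ^ 3 + b ^ 3) / s ^ 3)
        - 1 / (4 * (s ^ 2) ^ 2) * (a ^ 3 + b ^ 3) - p ^ (3 / 2 : ℝ) / (2 * s) := by gcongr
    _ = s ^ 2 * r ^ 3 := by field_simp; ring

open RealInnerProductSpace

theorem stmt_16_general {n : ℕ}
    (f : EuclideanSpace ℝ (Fin n) → ℝ)
    (L : ℝ) (hL : 0 ≤ L)
    (hf : ContDiff ℝ 2 f)
    (hLip : ∀ u v : EuclideanSpace ℝ (Fin n),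
      ‖fderiv ℝ (gradient f) v - fderiv ℝ (gradient f) u‖ ≤ L * ‖v - u‖)
    (x : EuclideanSpace ℝ (Fin n)) (z : EuclideanSpace ℝ (Fin n))
    (σ δg δB : ℝ) (hσ : σ ≥ 2 * L) (hσ0 : 0 < σ) (hδg : 0 ≤ δg) (hδB : 0 ≤ δB)
    (g : EuclideanSpace ℝ (Fin n))
    (B : EuclideanSpace ℝ (Fin n) →L[ℝ] EuclideanSpace ℝ (Fin n))
    (xp : EuclideanSpace ℝ (Fin n))
    (ψp : EuclideanSpace ℝ (Fin n))
    (hmodel : ‖g + B (xp - x) + (σ / 2 * ‖xp - x‖) • (xp - x) + ψp‖ ≤ σ / 4 * ‖xp - x‖ ^ 2)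
    (hg : ‖g - gradient f x‖ ≤ δg)
    (hB : ‖B - fderiv ℝ (gradient f) z‖ ≤ δB) :
    σ * ‖xp - x‖ ^ 3 ≥
      1 / (4 * Real.sqrt σ) * ‖gradient f xp + ψp‖ ^ ((3 : ℝ) / 2)
        - 1 / (4 * σ ^ 2) * (δB ^ 3 + L ^ 3 * ‖x - z‖ ^ 3)
        - δg ^ ((3 : ℝ) / 2) / (2 * Real.sqrt σ) := by
  have hgrad := norm_add_le_of_approx_cubic_step (hf.differentiable_gradient le_rfl) hLip hσ
    hσ0.le hmodel hg hB
  rw [← mul_pow]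
  exact mul_pow_three_ge_of_le_quadratic hσ0 (norm_nonneg _) hδg (norm_nonneg _) hδB
    (mul_nonneg hL (norm_nonneg _)) hgrad

/-- inequality (3.17) in the proof of Theorem 1: lower bound on the cubic
term `σ·r³` via the new (sub)gradient norm. -/
theorem stmt_16 {n : ℕ} (hn : 1 ≤ n)
    (f ψ : EuclideanSpace ℝ (Fin n) → ℝ) (Q : Set (EuclideanSpace ℝ (Fin n)))
    (L : ℝ) (hL : 0 ≤ L)
    (hf : ContDiff ℝ 2 f)
    (hLip : ∀ u v : EuclideanSpace ℝ (Fin n),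
      ‖fderiv ℝ (gradient f) v - fderiv ℝ (gradient f) u‖ ≤ L * ‖v - u‖)
    (hQconv : Convex ℝ Q) (hψconv : ConvexOn ℝ Q ψ)
    (x : EuclideanSpace ℝ (Fin n)) (hx : x ∈ Q) (z : EuclideanSpace ℝ (Fin n))
    (σ δg δB : ℝ) (hσ : σ ≥ 2 * L) (hσ0 : 0 < σ) (hδg : 0 ≤ δg) (hδB : 0 ≤ δB)
    (g : EuclideanSpace ℝ (Fin n))
    (B : EuclideanSpace ℝ (Fin n) →L[ℝ] EuclideanSpace ℝ (Fin n))
    (hBsym : ∀ u v : EuclideanSpace ℝ (Fin n), ⟪B u, v⟫ = ⟪u, B v⟫)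
    (xp : EuclideanSpace ℝ (Fin n)) (hxp : xp ∈ Q)
    (ψp : EuclideanSpace ℝ (Fin n))
    (hψp : ∀ y : EuclideanSpace ℝ (Fin n), ψ xp + ⟪ψp, y - xp⟫ ≤ ψ y)
    (hmodel : ‖g + B (xp - x) + (σ / 2 * ‖xp - x‖) • (xp - x) + ψp‖ ≤ σ / 4 * ‖xp - x‖ ^ 2)
    (hg : ‖g - gradient f x‖ ≤ δg)
    (hB : ‖B - fderiv ℝ (gradient f) z‖ ≤ δB) :
    σ * ‖xp - x‖ ^ 3 ≥
      1 / (4 * Real.sqrt σ) * ‖gradient f xp + ψp‖ ^ ((3 : ℝ) / 2)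
        - 1 / (4 * σ ^ 2) * (δB ^ 3 + L ^ 3 * ‖x - z‖ ^ 3)
        - δg ^ ((3 : ℝ) / 2) / (2 * Real.sqrt σ) :=
  stmt_16_general f L hL hf hLip x z σ δg δB hσ hσ0 hδg hδB g B xp ψp hmodel hg hB
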